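/- arXiv:1011.4554 — 6 statements merged into one kernel-verified Lean document; each statement's English description precedes it below -/
import Mathlib

section
/- If $(a_n)_{n\in\mathbb{N}}$ is a strictly increasing sequence of integers that converges to zero in some non-discrete Hausdorff group topology on $\mathbb{Z}$, then $\lim_{n\to\infty}(a_{n+1}-a_n)=\infty$. -/
open Filter Topology

/-- No compatibility between topology and order is needed: a neighbourhood of `c` in a `T1`
topology can avoid the finitely many points of `(c, b)`. -/
theorem tendsto_atTop_of_tendsto_nhds_of_eventually_gt {X α : Type*} [TopologicalSpace X]
    [T1Space X] [LinearOrder X] [LocallyFiniteOrder X] {l : Filter α} {f : α → X} {c : X}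
    (hf : Tendsto f l (𝓝 c)) (hgt : ∀ᶠ x in l, c < f x) : Tendsto f l atTop := by
  refine tendsto_atTop.2 fun b => ?_
  have hnot_mem : ∀ᶠ x in l, f x ∉ Set.Ioo c b :=
    hf.eventually ((Set.finite_Ioo c b).isClosed.isOpen_compl.mem_nhds (by simp))
  filter_upwards [hnot_mem, hgt] with x hx hcx
  simpa [hcx] using hx

theorem stmt0_general (τ : TopologicalSpace ℤ) (hg : @IsTopologicalAddGroup ℤ τ _)
    (h2 : @T2Space ℤ τ)
    (a : ℕ → ℤ) (hmono : StrictMono a)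
    (hconv : Tendsto a atTop (@nhds ℤ τ 0)) :
    Tendsto (fun n => a (n + 1) - a n) atTop atTop := by
  let := τ
  have hdiff : Tendsto (fun n => a (n + 1) - a n) atTop (𝓝 0) := by
    simpa using (hconv.comp (tendsto_add_atTop_nat 1)).sub hconv
  refine tendsto_atTop_of_tendsto_nhds_of_eventually_gt hdiff (Eventually.of_forall fun n => ?_)
  exact sub_pos.2 (hmono n.lt_succ_self)

theorem stmt0 (τ : TopologicalSpace ℤ) (hg : @IsTopologicalAddGroup ℤ τ _)
    (h2 : @T2Space ℤ τ) (hnd : τ ≠ ⊥)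
    (a : ℕ → ℤ) (hmono : StrictMono a)
    (hconv : Tendsto a atTop (@nhds ℤ τ 0)) :
    Tendsto (fun n => a (n + 1) - a n) atTop atTop :=
  stmt0_general τ hg h2 a hmono hconv
end

section
/- Let $\tau$ be a metrizable totally bounded group topology on $\mathbb{Z}$, let $f:\mathbb{N}\to\mathbb{N}$ satisfy $\lim_{n\to\infty}(f(n+1)-f(n))=\infty$, and let $\varepsilon:\mathbb{N}\to[0,\infty)$ satisfy $\lim_{n\to\infty}\varepsilon(n)=\infty$. Then there exists a sequence $(a_n)$ of integers converging to $0$ in $\tau$ with $|a_n - f(n)| \le \varepsilon(n)$ for all $n$ and $\lim_{n\to\infty} a_n/f(n) = 1$. -/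
/-!
Fix a countable decreasing basis `V k` of neighbourhoods of `0`. Total boundedness makes every
`V k` relatively dense in `ℤ`: it meets every interval of some length `C k`. Since the admissible
error `min (ε n) (√(f n))` tends to infinity, for large `n` we may pick `a n` within that error
of `f n` in `V k` for ever larger `k`; the error `√(f n) = o(f n)` then forces `a n / f n → 1`.
-/

open Filter Topology

theorem tendsto_atTop_of_tendsto_sub_atTop {u : ℕ → ℤ}
    (h : Tendsto (fun n => u (n + 1) - u n) atTop atTop) : Tendsto u atTop atTop := by
  obtain ⟨N, hN⟩ := eventually_atTop.1 (h.eventually_ge_atTop 1)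
  have hlow : ∀ n ≥ N, u N + ((n : ℤ) - N) ≤ u n := by
    intro n hn
    induction n, hn using Nat.le_induction with
    | base => simp
    | succ n hn ih => have := hN n hn; push_cast; omega
  refine tendsto_atTop_mono' _ (eventually_atTop.2 ⟨N, hlow⟩) ?_
  exact tendsto_atTop_add_const_left _ _
    (tendsto_atTop_add_const_right _ _ tendsto_natCast_atTop_atTop)

theorem exists_abs_sub_le_of_forall_exists_sub_mem {U : Set ℤ} {F : Finset ℤ}
    (hF : ∀ x, ∃ y ∈ F, x - y ∈ U) : ∃ C : ℝ, ∀ x : ℤ, ∃ u ∈ U, |(u : ℝ) - x| ≤ C := by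
  refine ⟨∑ y ∈ F, |(y : ℝ)|, fun x => ?_⟩
  obtain ⟨y, hyF, hy⟩ := hF x
  refine ⟨x - y, hy, ?_⟩
  calc |((x - y : ℤ) : ℝ) - x| = |(y : ℝ)| := by push_cast; rw [sub_sub_cancel_left, abs_neg]
    _ ≤ ∑ y ∈ F, |(y : ℝ)| :=
      Finset.single_le_sum (f := fun y : ℤ => |(y : ℝ)|) (fun _ _ => abs_nonneg _) hyF

theorem Filter.exists_tendsto_forall_of_eventually_exists_mem {α : Type*} {l : Filter α}
    [l.IsCountablyGenerated] {P : ℕ → α → Prop} (hP : ∀ n, ∃ a, P n a)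
    (hl : ∀ U ∈ l, ∀ᶠ n in atTop, ∃ a ∈ U, P n a) :
    ∃ a : ℕ → α, Tendsto a atTop l ∧ ∀ n, P n (a n) := by
  classical
  obtain ⟨V, hV⟩ := l.exists_antitone_basis
  let Q : ℕ → ℕ → Prop := fun n k => ∃ a ∈ V k, P n a
  -- `K n` is the deepest basis set, among the first `n`, that can host `a n`.
  let K : ℕ → ℕ := fun n => Nat.findGreatest (Q n) n
  let a : ℕ → α := fun n => if h : Q n (K n) then h.choose else (hP n).choose
  have ha_mem : ∀ n, Q n (K n) → a n ∈ V (K n) := fun n h => by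
    simpa only [a, dif_pos h] using h.choose_spec.1
  refine ⟨a, hV.toHasBasis.tendsto_right_iff.2 fun k _ => ?_, fun n => ?_⟩
  · filter_upwards [eventually_ge_atTop k, hl _ (hV.mem k)] with n hkn hQ
    exact hV.antitone (Nat.le_findGreatest hkn hQ) (ha_mem n (Nat.findGreatest_spec hkn hQ))
  · by_cases h : Q n (K n)
    · simpa only [a, dif_pos h] using h.choose_spec.2
    · simpa only [a, dif_neg h] using (hP n).choose_spec

theorem tendsto_div_nhds_one_of_abs_sub_le_sqrt {ι : Type*} {l : Filter ι} {u v : ι → ℝ}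
    (hv : Tendsto v l atTop) (huv : ∀ᶠ i in l, |u i - v i| ≤ √(v i)) :
    Tendsto (fun i => u i / v i) l (𝓝 1) := by
  have hsqrt : Tendsto (fun i => (√(v i))⁻¹) l (𝓝 0) :=
    tendsto_inv_atTop_zero.comp (Real.tendsto_sqrt_atTop.comp hv)
  refine tendsto_sub_nhds_zero_iff.1 (squeeze_zero_norm' ?_ hsqrt)
  filter_upwards [huv, hv.eventually_gt_atTop 0] with i hi hvi
  rw [Real.norm_eq_abs, div_sub_one hvi.ne', abs_div, abs_of_pos hvi, ← Real.sqrt_div_self]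
  gcongr

theorem stmt2_general (τ : TopologicalSpace ℤ)
    (hmet : @TopologicalSpace.MetrizableSpace ℤ τ)
    (htb : ∀ U ∈ @nhds ℤ τ 0, ∃ F : Finset ℤ, ∀ x : ℤ, ∃ y ∈ F, x - y ∈ U)
    (f : ℕ → ℕ) (hf : Tendsto (fun n => (f (n + 1) : ℤ) - f n) atTop atTop)
    (ε : ℕ → ℝ) (hε0 : ∀ n, 0 ≤ ε n) (hε : Tendsto ε atTop atTop) :
    ∃ a : ℕ → ℤ, Tendsto a atTop (@nhds ℤ τ 0) ∧
      (∀ n, |(a n : ℝ) - f n| ≤ ε n) ∧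
      Tendsto (fun n => (a n : ℝ) / f n) atTop (nhds 1) := by
  let := τ
  have hf_top : Tendsto (fun n => (f n : ℝ)) atTop atTop :=
    (tendsto_intCast_atTop_atTop.comp (tendsto_atTop_of_tendsto_sub_atTop (u := fun n => (f n : ℤ)) hf)).congr
      fun n => by simp
  set d : ℕ → ℝ := fun n => min (ε n) √(f n)
  have hd : Tendsto d atTop atTop := tendsto_atTop.2 fun b => by
    filter_upwards [hε.eventually_ge_atTop b,
      (Real.tendsto_sqrt_atTop.comp hf_top).eventually_ge_atTop b] with n h₁ h₂
    exact le_min h₁ h₂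
  obtain ⟨a, ha₀, had⟩ := exists_tendsto_forall_of_eventually_exists_mem (l := 𝓝 (0 : ℤ))
    (P := fun n a => |(a : ℝ) - f n| ≤ d n)
    (fun n => ⟨f n, by simp [d, hε0 n]⟩)
    (fun U hU => by
      obtain ⟨F, hF⟩ := htb U hU
      obtain ⟨C, hC⟩ := exists_abs_sub_le_of_forall_exists_sub_mem hF
      filter_upwards [hd.eventually_ge_atTop C] with n hn
      obtain ⟨u, hu, huC⟩ := hC (f n)
      exact ⟨u, hu, by simpa using huC.trans hn⟩)
  exact ⟨a, ha₀, fun n => (had n).trans (min_le_left _ _),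
    tendsto_div_nhds_one_of_abs_sub_le_sqrt hf_top
      (Eventually.of_forall fun n => (had n).trans (min_le_right _ _))⟩

theorem stmt2 (τ : TopologicalSpace ℤ) (hg : @IsTopologicalAddGroup ℤ τ _)
    (hmet : @TopologicalSpace.MetrizableSpace ℤ τ)
    (htb : ∀ U ∈ @nhds ℤ τ 0, ∃ F : Finset ℤ, ∀ x : ℤ, ∃ y ∈ F, x - y ∈ U)
    (f : ℕ → ℕ) (hf : Tendsto (fun n => (f (n + 1) : ℤ) - f n) atTop atTop)
    (ε : ℕ → ℝ) (hε0 : ∀ n, 0 ≤ ε n) (hε : Tendsto ε atTop atTop) :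
    ∃ a : ℕ → ℤ, Tendsto a atTop (@nhds ℤ τ 0) ∧
      (∀ n, |(a n : ℝ) - f n| ≤ ε n) ∧
      Tendsto (fun n => (a n : ℝ) / f n) atTop (nhds 1) :=
  stmt2_general τ hmet htb f hf ε hε0 hε
end

section
/- Fix a real number $r > 1$ and define a sequence of integers by $a_n = \lfloor r^{n/2}\rfloor^2 + 1$ if $n = 2\cdot 3^k$ for some $k \ge 1$, and $a_n = \lfloor r^n \rfloor$ otherwise. Then $\lim_{n\to\infty} a_{n+1}/a_n = r$. -/
open Filter

theorem stmt5 (r : ℝ) (hr : 1 < r) (a : ℕ → ℤ)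
    (ha1 : ∀ k : ℕ, 1 ≤ k → a (2 * 3 ^ k) = ⌊r ^ (3 ^ k : ℕ)⌋ ^ 2 + 1)
    (ha2 : ∀ n : ℕ, 1 ≤ n → (¬ ∃ k ≥ 1, n = 2 * 3 ^ k) → a n = ⌊r ^ n⌋) :
    Tendsto (fun n => (a (n + 1) : ℝ) / a n) atTop (nhds r) := by
  have hr0 : (0:ℝ) < r := lt_trans one_pos hr
  set s := Real.sqrt r with hs
  have hs1 : 1 < s := by
    rw [hs, show (1:ℝ) = Real.sqrt 1 by simp]
    exact Real.sqrt_lt_sqrt zero_le_one hr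
  have hs0 : 0 < s := lt_trans one_pos hs1
  have hssq : s ^ 2 = r := Real.sq_sqrt hr0.le
  have key : ∀ n : ℕ, 1 ≤ n → |(a n : ℝ) - r ^ n| ≤ 2 * s ^ n + 1 := by
    intro n hn
    have hsn : 0 < s ^ n := pow_pos hs0 n
    by_cases h : ∃ k ≥ 1, n = 2 * 3 ^ k
    · obtain ⟨k, hk, rfl⟩ := h
      rw [ha1 k hk]
      set x := r ^ (3 ^ k) with hx
      have hx1 : 1 ≤ x := one_le_pow₀ hr.le
      have hfl : (⌊x⌋ : ℝ) ≤ x := Int.floor_le x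
      have hfg : x - 1 < ⌊x⌋ := Int.sub_one_lt_floor x
      have hf0 : 0 ≤ (⌊x⌋:ℝ) := by linarith
      have hrn : r ^ (2 * 3 ^ k) = x ^ 2 := by rw [hx, ← pow_mul, mul_comm]
      have hsn' : s ^ (2 * 3 ^ k) = x := by rw [pow_mul, hssq, hx]
      rw [hrn, hsn']
      push_cast
      rw [abs_le]
      constructor <;> nlinarith
    · rw [ha2 n hn h]
      have hfl : (⌊r^n⌋ : ℝ) ≤ r^n := Int.floor_le _
      have hfg : r^n - 1 < ⌊r^n⌋ := Int.sub_one_lt_floor _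
      rw [abs_le]; constructor <;> nlinarith
  have hrn0 : ∀ n : ℕ, (0:ℝ) < r ^ n := fun n => pow_pos hr0 n
  -- a n / r^n → 1
  have hb0 : Tendsto (fun n => (a n : ℝ) / r ^ n - 1) atTop (nhds 0) := by
    apply squeeze_zero_norm' (a := fun n : ℕ => 2 * (s/r) ^ n + (1/r) ^ n) (f := fun n => (a n : ℝ) / r ^ n - 1)
    · filter_upwards [eventually_ge_atTop 1] with n hn
      have h1 := key n hn
      have h2 : ‖(a n : ℝ) / r ^ n - 1‖ = |(a n : ℝ) - r ^ n| / r ^ n := by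
        have : (a n : ℝ) / r ^ n - 1 = ((a n : ℝ) - r ^ n) / r ^ n := by
          field_simp
        rw [this, Real.norm_eq_abs, abs_div, abs_of_pos (hrn0 n)]
      rw [h2, div_pow, div_pow, one_pow]
      rw [div_le_iff₀ (hrn0 n)]
      have : (2 * (s ^ n / r ^ n) + 1 / r ^ n) * r ^ n = 2 * s ^ n + 1 := by
        field_simp
      rw [this]
      exact h1
    · have l1 : Tendsto (fun n : ℕ => (s/r) ^ n) atTop (nhds 0) := by
        apply tendsto_pow_atTop_nhds_zero_of_lt_one
        · positivity
        · rw [div_lt_one hr0, ← hssq]; nlinarith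
      have l2 : Tendsto (fun n : ℕ => (1/r) ^ n) atTop (nhds 0) := by
        apply tendsto_pow_atTop_nhds_zero_of_lt_one
        · positivity
        · rw [div_lt_one hr0]; exact hr
      have := (l1.const_mul 2).add l2
      simpa using this
  have hb : Tendsto (fun n => (a n : ℝ) / r ^ n) atTop (nhds 1) := by
    have := hb0.add (tendsto_const_nhds (x := (1:ℝ)))
    simpa using this
  -- eventually a n > 0
  have hpos : ∀ᶠ n in atTop, (0:ℝ) < (a n : ℝ) := by
    have := hb.eventually (eventually_gt_nhds (by norm_num : (1:ℝ)/2 < 1))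
    filter_upwards [this] with n hn
    have := hrn0 n
    by_contra hcon
    push_neg at hcon
    have : (a n : ℝ) / r ^ n ≤ 0 := div_nonpos_of_nonpos_of_nonneg hcon (hrn0 n).le
    linarith
  have hb' : Tendsto (fun n => (a (n+1) : ℝ) / r ^ (n+1)) atTop (nhds 1) :=
    hb.comp (tendsto_add_atTop_nat 1)
  have hmain : Tendsto (fun n => ((a (n+1) : ℝ) / r ^ (n+1)) / ((a n : ℝ) / r ^ n) * r)
      atTop (nhds r) := by
    have := (hb'.div hb one_ne_zero).mul_const r
    simpa using this
  apply hmain.congr'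
  filter_upwards [hpos] with n hn
  have h1 : (a n : ℝ) ≠ 0 := ne_of_gt hn
  have h2 : r ^ n ≠ 0 := (hrn0 n).ne'
  field_simp
  ring
end

section
/- Fix a real number $r > 1$ and define $a_n = \lfloor r^{n/2}\rfloor^2 + 1$ if $n = 2\cdot 3^k$ for some $k \ge 1$, and $a_n = \lfloor r^n \rfloor$ otherwise. Then $a_{2\cdot 3^k} - (a_{3^k})^2 = 1$ for every $k \ge 1$, and consequently the sequence $(a_n)$ does not converge to $0$ in any Hausdorff ring topology on $\mathbb{Z}$. -/
open Filter Topology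

/-!
Along the subsequences `3 ^ k` and `2 * 3 ^ k` the sequence satisfies `a (2 * 3 ^ k) - a (3 ^ k) ^ 2 = 1`.
If `a → 0` in a ring topology, the left side tends to `0 - 0 ^ 2 = 0`, and in a Hausdorff space the
constant sequence `1` cannot also tend to `0`.
-/

theorem not_eventually_sub_sq_eq_one_of_tendsto_zero {R : Type*} [Ring R] [Nontrivial R]
    [TopologicalSpace R] [IsTopologicalRing R] [T2Space R] {a : ℕ → R}
    (ha : Tendsto a atTop (𝓝 0)) {φ ψ : ℕ → ℕ} (hφ : Tendsto φ atTop atTop)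
    (hψ : Tendsto ψ atTop atTop) : ¬ ∀ᶠ k in atTop, a (φ k) - a (ψ k) ^ 2 = 1 := by
  intro h
  have hlim : Tendsto (fun k => a (φ k) - a (ψ k) ^ 2) atTop (𝓝 (0 - 0 ^ 2)) :=
    (ha.comp hφ).sub ((ha.comp hψ).pow 2)
  have hone : Tendsto (fun _ : ℕ => (1 : R)) atTop (𝓝 (0 - 0 ^ 2)) := hlim.congr' h
  simpa using tendsto_nhds_unique tendsto_const_nhds hone

theorem three_pow_ne_two_mul_three_pow (k j : ℕ) : 3 ^ k ≠ 2 * 3 ^ j := fun h =>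
  Nat.not_even_iff_odd.mpr (Odd.pow (by decide : Odd 3)) (h ▸ even_two_mul _)

theorem tendsto_three_pow_atTop : Tendsto (fun k : ℕ => 3 ^ k) atTop atTop :=
  tendsto_pow_atTop_atTop_of_one_lt (by norm_num)

theorem tendsto_two_mul_three_pow_atTop : Tendsto (fun k : ℕ => 2 * 3 ^ k) atTop atTop :=
  tendsto_atTop_mono (fun _ => Nat.le_mul_of_pos_left _ two_pos) tendsto_three_pow_atTop

theorem stmt6_general (r : ℝ) (a : ℕ → ℤ)
    (ha1 : ∀ k : ℕ, 1 ≤ k → a (2 * 3 ^ k) = ⌊r ^ (3 ^ k : ℕ)⌋ ^ 2 + 1)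
    (ha2 : ∀ n : ℕ, 1 ≤ n → (¬ ∃ k ≥ 1, n = 2 * 3 ^ k) → a n = ⌊r ^ n⌋) :
    (∀ k : ℕ, 1 ≤ k → a (2 * 3 ^ k) - (a (3 ^ k)) ^ 2 = 1) ∧
    ∀ (τ : TopologicalSpace ℤ), @IsTopologicalRing ℤ τ _ → @T2Space ℤ τ →
      ¬ Tendsto a atTop (@nhds ℤ τ 0) := by
  have key : ∀ k : ℕ, 1 ≤ k → a (2 * 3 ^ k) - (a (3 ^ k)) ^ 2 = 1 := by
    intro k hk
    have h3 : a (3 ^ k) = ⌊r ^ (3 ^ k : ℕ)⌋ :=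
      ha2 _ (Nat.one_le_pow _ _ three_pos) fun ⟨j, _, hj⟩ => three_pow_ne_two_mul_three_pow k j hj
    rw [ha1 k hk, h3]
    ring
  refine ⟨key, fun τ _ _ ha => ?_⟩
  exact not_eventually_sub_sq_eq_one_of_tendsto_zero ha tendsto_two_mul_three_pow_atTop
    tendsto_three_pow_atTop (eventually_atTop.mpr ⟨1, key⟩)

theorem stmt6 (r : ℝ) (hr : 1 < r) (a : ℕ → ℤ)
    (ha1 : ∀ k : ℕ, 1 ≤ k → a (2 * 3 ^ k) = ⌊r ^ (3 ^ k : ℕ)⌋ ^ 2 + 1)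
    (ha2 : ∀ n : ℕ, 1 ≤ n → (¬ ∃ k ≥ 1, n = 2 * 3 ^ k) → a n = ⌊r ^ n⌋) :
    (∀ k : ℕ, 1 ≤ k → a (2 * 3 ^ k) - (a (3 ^ k)) ^ 2 = 1) ∧
    ∀ (τ : TopologicalSpace ℤ), @IsTopologicalRing ℤ τ _ → @T2Space ℤ τ →
      ¬ Tendsto a atTop (@nhds ℤ τ 0) :=
  stmt6_general r a ha1 ha2
end

section
/- For every real $r > 1$ there exists a sequence of integers $(a_n)$ with $\lim_{n\to\infty} a_{n+1}/a_n = r$ such that $(a_n)$ does not converge to $0$ in any non-discrete Hausdorff ring topology on $\mathbb{Z}$. -/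
/-!
Take `aₙ = ⌈rⁿ⌉` for odd `n` and `a₂ₘ = ⌈rᵐ⌉² + 1`. In both cases `aₙ / rⁿ → 1`, so
`aₙ₊₁ / aₙ → r`. If `aₙ → 0` in a Hausdorff ring topology, then along odd `m` both `aₘ → 0` and
`a₂ₘ = aₘ² + 1 → 0`; by continuity the latter also tends to `1`, so `1 = 0`.
-/

open Filter Topology

noncomputable def ceilPowWithSquares (r : ℝ) (n : ℕ) : ℤ :=
  if Even n then (⌈r ^ (n / 2)⌉₊ : ℤ) ^ 2 + 1 else ⌈r ^ n⌉₊

lemma ceilPowWithSquares_two_mul_of_odd (r : ℝ) {m : ℕ} (hm : Odd m) :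
    ceilPowWithSquares r (2 * m) = ceilPowWithSquares r m ^ 2 + 1 := by
  simp [ceilPowWithSquares, Nat.not_even_iff_odd.mpr hm]

lemma tendsto_natCeil_pow_div_pow {r : ℝ} (hr : 1 < r) :
    Tendsto (fun n : ℕ => (⌈r ^ n⌉₊ : ℝ) / r ^ n) atTop (𝓝 1) :=
  tendsto_nat_ceil_div_atTop.comp (tendsto_pow_atTop_atTop_of_one_lt hr)

lemma tendsto_ceilPowWithSquares_div_pow {r : ℝ} (hr : 1 < r) :
    Tendsto (fun n => (ceilPowWithSquares r n : ℝ) / r ^ n) atTop (𝓝 1) := by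
  have hceil := tendsto_natCeil_pow_div_pow hr
  unfold ceilPowWithSquares
  push_cast [ite_div]
  refine Tendsto.if ?_ (tendsto_inf_left (by simpa using hceil))
  have hhalf : Tendsto (fun n : ℕ => ((⌈r ^ (n / 2)⌉₊ : ℝ) / r ^ (n / 2)) ^ 2 + (r ^ n)⁻¹)
      atTop (𝓝 1) := by
    simpa using ((hceil.comp (Nat.tendsto_div_const_atTop two_ne_zero)).pow 2).add
      (tendsto_inv_atTop_zero.comp (tendsto_pow_atTop_atTop_of_one_lt hr))
  refine (tendsto_inf_left hhalf).congr' (eventually_inf_principal.mpr (.of_forall ?_))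
  rintro n ⟨m, rfl⟩
  have hpos : r ^ m ≠ 0 := by positivity
  dsimp only
  rw [← two_mul, Nat.mul_div_cancel_left m two_pos, pow_mul']
  field_simp

lemma tendsto_succ_div_of_tendsto_div_pow {a : ℕ → ℝ} {r : ℝ} (hr : r ≠ 0)
    (h : Tendsto (fun n => a n / r ^ n) atTop (𝓝 1)) :
    Tendsto (fun n => a (n + 1) / a n) atTop (𝓝 r) := by
  have := ((h.comp (tendsto_add_atTop_nat 1)).div h one_ne_zero).mul_const r
  simp only [Function.comp_def, div_one, one_mul] at this
  refine this.congr fun n => ?_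
  simp only [Pi.div_apply, pow_succ]
  field_simp

lemma not_tendsto_sq_add_one_of_tendsto_zero {R α : Type*} [Semiring R] [TopologicalSpace R]
    [ContinuousAdd R] [ContinuousMul R] [T2Space R] [Nontrivial R] {l : Filter α} [l.NeBot]
    {v : α → R} (hv : Tendsto v l (𝓝 0)) : ¬Tendsto (fun k => v k ^ 2 + 1) l (𝓝 0) := by
  intro h
  have h1 : Tendsto (fun k => v k ^ 2 + 1) l (𝓝 1) := by
    simpa using (hv.pow 2).add_const 1
  exact one_ne_zero (tendsto_nhds_unique h1 h)

theorem stmt8 (r : ℝ) (hr : 1 < r) :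
    ∃ a : ℕ → ℤ,
      Tendsto (fun n => (a (n + 1) : ℝ) / a n) atTop (nhds r) ∧
      ∀ (τ : TopologicalSpace ℤ), @IsTopologicalRing ℤ τ _ → @T2Space ℤ τ →
        τ ≠ ⊥ → ¬ Tendsto a atTop (@nhds ℤ τ 0) := by
  refine ⟨ceilPowWithSquares r,
    tendsto_succ_div_of_tendsto_div_pow (a := fun n => (ceilPowWithSquares r n : ℝ))
      (by positivity) (tendsto_ceilPowWithSquares_div_pow hr),
    fun τ _ _ _ ha => ?_⟩
  have hodd : Tendsto (fun k : ℕ => 2 * k + 1) atTop atTop :=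
    tendsto_atTop_atTop.mpr fun b => ⟨b, fun k hk => by omega⟩
  refine @not_tendsto_sq_add_one_of_tendsto_zero ℤ ℕ _ τ _ _ _ _ _ _ _ (ha.comp hodd) ?_
  have hsq := ha.comp (hodd.const_mul_atTop' two_pos)
  simpa only [Function.comp_def, ceilPowWithSquares_two_mul_of_odd r (odd_two_mul_add_one _)]
    using hsq
end

section
/- Let $G$ be an abelian group with two Hausdorff group topologies $\tau_1, \tau_2$, let $(a_n) \to 0$ in $(G,\tau_1)$, $(b_n) \to 0$ in $(G,\tau_2)$, and suppose some nonzero $g\in G$ satisfies: for every $n_0$ there exist $n,m \ge n_0$ with $g = b_m - a_n$. Then the topology $\tau_1 \vee \tau_2$ (the supremum of the two topologies) on $G$ is not complete (as a topological group with its two-sided uniformity). -/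
/-!
Choose `n k, m k → ∞` with `g = b (m k) - a (n k)`. The sequence `a (n k)` tends to `0` for `τ1`
and to `-g` for `τ2`, so it is Cauchy for both right uniformities, whose infimum is the right
uniformity of `τ1 ⊓ τ2`. A limit for `τ1 ⊓ τ2` would be a limit in both Hausdorff topologies,
forcing `0 = -g`.
-/

open Filter

@[to_additive]
theorem IsTopologicalGroup.rightUniformSpace_inf {G : Type*} [Group G]
    {τ₁ τ₂ : TopologicalSpace G} (h₁ : @IsTopologicalGroup G τ₁ _)
    (h₂ : @IsTopologicalGroup G τ₂ _) :
    @IsTopologicalGroup.rightUniformSpace G _ (τ₁ ⊓ τ₂) (topologicalGroup_inf h₁ h₂) =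
      @IsTopologicalGroup.rightUniformSpace G _ τ₁ h₁ ⊓
        @IsTopologicalGroup.rightUniformSpace G _ τ₂ h₂ := by
  refine UniformSpace.ext ?_
  rw [inf_uniformity]
  exact (congrArg _ (nhds_inf (t₁ := τ₁) (t₂ := τ₂))).trans comap_inf

theorem eq_of_le_nhds_of_completeSpace_inf {G : Type*} [AddGroup G]
    {τ₁ τ₂ : TopologicalSpace G} (h₁ : @IsTopologicalAddGroup G τ₁ _)
    (h₂ : @IsTopologicalAddGroup G τ₂ _) [@T2Space G τ₁] [@T2Space G τ₂]
    [@CompleteSpace G (@IsTopologicalAddGroup.rightUniformSpace G _ (τ₁ ⊓ τ₂)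
      (topologicalAddGroup_inf h₁ h₂))]
    {F : Filter G} [F.NeBot] {p q : G} (hp : F ≤ @nhds G τ₁ p) (hq : F ≤ @nhds G τ₂ q) :
    p = q := by
  have hF : @Cauchy G (@IsTopologicalAddGroup.rightUniformSpace G _ (τ₁ ⊓ τ₂)
      (topologicalAddGroup_inf h₁ h₂)) F := by
    rw [IsTopologicalAddGroup.rightUniformSpace_inf h₁ h₂, cauchy_inf_uniformSpace]
    constructor
    · let := @IsTopologicalAddGroup.rightUniformSpace G _ τ₁ h₁
      exact cauchy_nhds.mono hp
    · let := @IsTopologicalAddGroup.rightUniformSpace G _ τ₂ h₂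
      exact cauchy_nhds.mono hq
  obtain ⟨y, hy⟩ := CompleteSpace.complete hF
  rw [nhds_inf (t₁ := τ₁) (t₂ := τ₂), le_inf_iff] at hy
  exact (@tendsto_nhds_unique _ _ τ₁ _ _ _ _ _ _ hp hy.1).trans
    (@tendsto_nhds_unique _ _ τ₂ _ _ _ _ _ _ hy.2 hq)

theorem stmt10 (G : Type*) [AddCommGroup G] (τ1 τ2 : TopologicalSpace G)
    (h1 : @IsTopologicalAddGroup G τ1 _) (h2 : @IsTopologicalAddGroup G τ2 _)
    (ht1 : @T2Space G τ1) (ht2 : @T2Space G τ2)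
    (a b : ℕ → G)
    (ha : Tendsto a atTop (@nhds G τ1 0)) (hb : Tendsto b atTop (@nhds G τ2 0))
    (g : G) (hg : g ≠ 0)
    (hgab : ∀ n₀ : ℕ, ∃ n ≥ n₀, ∃ m ≥ n₀, g = b m - a n) :
    ¬ @CompleteSpace G
        (@IsTopologicalAddGroup.rightUniformSpace G _ (τ1 ⊓ τ2)
          (topologicalAddGroup_inf h1 h2)) := by
  intro hc
  choose n hn m hm hgnm using hgab
  have hn_tendsto : Tendsto n atTop atTop := tendsto_atTop_mono hn tendsto_id
  have hm_tendsto : Tendsto m atTop atTop := tendsto_atTop_mono hm tendsto_id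
  have lim₁ : Tendsto (a ∘ n) atTop (@nhds G τ1 0) := ha.comp hn_tendsto
  have lim₂ : Tendsto (a ∘ n) atTop (@nhds G τ2 (-g)) := by
    have hb' : Tendsto (fun k => b (m k) + -g) atTop (@nhds G τ2 (0 + -g)) := by
      let := τ2
      exact (hb.comp hm_tendsto).add_const (-g)
    rw [zero_add] at hb'
    refine hb'.congr fun k => ?_
    simp [hgnm k]
  exact hg (neg_eq_zero.1 (eq_of_le_nhds_of_completeSpace_inf h1 h2 lim₁ lim₂).symm)
end
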